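/- Let A ∈ ℂ^{M×N_a} and B ∈ ℂ^{M×N_b} be matrices with unit ℓ²-norm columns, with B having coherence μ_b and with mutual coherence μ_m between A and B. Let E ⊆ {1,…,N_b} with |E| = n_e and assume μ_b(n_e − 1) < 1, so that B_E^H B_E is invertible, and let R_E = I_M − B_E (B_E^H B_E)^{−1} B_E^H. Then for every column a_ℓ of A, ‖R_E a_ℓ‖₂² ≥ 1 − n_e μ_m² / (1 − μ_b(n_e − 1)). In particular, if additionally n_e μ_m² < 1 − μ_b(n_e − 1), then ‖R_E a_ℓ‖₂ > 0 for every ℓ. -/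

import Mathlib

open scoped BigOperators ComplexConjugate
open Matrix

/-- Coherence of a matrix: max over distinct column pairs of |aₖᴴ aₗ| (0 if fewer than 2 columns). -/
noncomputable def coh {m n : Type*} [Fintype m] [Fintype n] (A : Matrix m n ℂ) : ℝ :=
  ⨆ k, ⨆ l, ⨆ _ : k ≠ l, ‖∑ i, conj (A i k) * A i l‖

/-- Mutual coherence between two matrices: max over column pairs of |aₖᴴ bₗ|. -/
noncomputable def mcoh {m na nb : Type*} [Fintype m] [Fintype na] [Fintype nb]
    (A : Matrix m na ℂ) (B : Matrix m nb ℂ) : ℝ :=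
  ⨆ k, ⨆ l, ‖∑ i, conj (A i k) * B i l‖

/-- All columns have unit ℓ²-norm. -/
def unitCols {m n : Type*} [Fintype m] (A : Matrix m n ℂ) : Prop :=
  ∀ k, ∑ i, ‖A i k‖ ^ 2 = 1

/-- Number of nonzero entries of a vector. -/
noncomputable def l0 {n : Type*} (v : n → ℂ) : ℕ := {i | v i ≠ 0}.ncard

/-- ℓ¹ norm of a vector. -/
noncomputable def l1 {n : Type*} [Fintype n] (v : n → ℂ) : ℝ := ∑ i, ‖v i‖

/-- Squared ℓ² norm of a vector. -/
noncomputable def l2sq {n : Type*} [Fintype n] (v : n → ℂ) : ℝ := ∑ i, ‖v i‖ ^ 2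

/-- Submatrix consisting of the columns with index in `E`. -/
def colsub {m n : Type*} (B : Matrix m n ℂ) (E : Finset n) : Matrix m {j // j ∈ E} ℂ :=
  fun i j => B i j.val

/-- Orthogonal projector onto the orthogonal complement of the column span of `B_E`. -/
noncomputable def projC {m n : Type*} [Fintype m] [DecidableEq m] [DecidableEq n]
    (B : Matrix m n ℂ) (E : Finset n) : Matrix m m ℂ :=
  1 - colsub B E * ((colsub B E)ᴴ * colsub B E)⁻¹ * (colsub B E)ᴴ
open scoped ComplexOrder

lemma le_coh {m n : Type*} [Fintype m] [Fintype n] (A : Matrix m n ℂ) {k l : n} (h : k ≠ l) :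
    ‖∑ i, conj (A i k) * A i l‖ ≤ coh A := by
  rw [coh]
  calc ‖∑ i, conj (A i k) * A i l‖
      = ⨆ _ : k ≠ l, ‖∑ i, conj (A i k) * A i l‖ :=
        (ciSup_pos (f := fun _ => ‖∑ i, conj (A i k) * A i l‖) h).symm
    _ ≤ ⨆ l, ⨆ _ : k ≠ l, ‖∑ i, conj (A i k) * A i l‖ :=
        le_ciSup (f := fun l => ⨆ _ : k ≠ l, ‖∑ i, conj (A i k) * A i l‖)
          (Set.Finite.bddAbove (Set.finite_range _)) l
    _ ≤ ⨆ k, ⨆ l, ⨆ _ : k ≠ l, ‖∑ i, conj (A i k) * A i l‖ :=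
        le_ciSup (f := fun k => ⨆ l, ⨆ _ : k ≠ l, ‖∑ i, conj (A i k) * A i l‖)
          (Set.Finite.bddAbove (Set.finite_range _)) k

lemma le_mcoh {m na nb : Type*} [Fintype m] [Fintype na] [Fintype nb]
    (A : Matrix m na ℂ) (B : Matrix m nb ℂ) (k : na) (l : nb) :
    ‖∑ i, conj (A i k) * B i l‖ ≤ mcoh A B := by
  rw [mcoh]
  calc ‖∑ i, conj (A i k) * B i l‖
      ≤ ⨆ l, ‖∑ i, conj (A i k) * B i l‖ :=
        le_ciSup (f := fun l => ‖∑ i, conj (A i k) * B i l‖)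
          (Set.Finite.bddAbove (Set.finite_range _)) l
    _ ≤ ⨆ k, ⨆ l, ‖∑ i, conj (A i k) * B i l‖ :=
        le_ciSup (f := fun k => ⨆ l, ‖∑ i, conj (A i k) * B i l‖)
          (Set.Finite.bddAbove (Set.finite_range _)) k

lemma coh_nonneg {m n : Type*} [Fintype m] [Fintype n] (A : Matrix m n ℂ) : 0 ≤ coh A := by
  apply Real.iSup_nonneg; intro k
  apply Real.iSup_nonneg; intro l
  exact Real.iSup_nonneg fun _ => norm_nonneg _

lemma dot_star_self' {n : Type*} [Fintype n] (w : n → ℂ) :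
    dotProduct (star w) w = ((∑ i, ‖w i‖ ^ 2 : ℝ) : ℂ) := by
  rw [dotProduct]
  push_cast
  refine Finset.sum_congr rfl fun i _ => ?_
  rw [Pi.star_apply, ← Complex.conj_mul']
  rfl

lemma norm_sub_sq_complex (z w : ℂ) :
    ‖z - w‖ ^ 2 = ‖z‖ ^ 2 - 2 * (conj z * w).re + ‖w‖ ^ 2 := by
  have e : ∀ u : ℂ, ‖u‖ ^ 2 = Complex.normSq u := fun u => by
    rw [Complex.sq_norm]
  have hc : (z * conj w).re = (conj z * w).re := by
    have h : conj z * w = conj (z * conj w) := by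
      rw [_root_.map_mul, Complex.conj_conj]
    rw [h, Complex.conj_re]
  rw [e, e, e, Complex.normSq_sub, hc]
  ring

lemma quad_lower' {m n : Type*} [Fintype m] [Fintype n] [DecidableEq n] (C : Matrix m n ℂ)
    (hdiag : ∀ k, (∑ i, ‖C i k‖ ^ 2 : ℝ) = 1)
    (μ : ℝ) (hμ0 : 0 ≤ μ)
    (hoff : ∀ k l : n, k ≠ l → ‖∑ i, conj (C i k) * C i l‖ ≤ μ)
    (x : n → ℂ) :
    (1 - μ * ((Fintype.card n : ℝ) - 1)) * (∑ k, ‖x k‖ ^ 2)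
      ≤ (dotProduct (star x) ((Cᴴ * C) *ᵥ x)).re := by
  have expand : dotProduct (star x) ((Cᴴ * C) *ᵥ x)
      = ∑ k, ∑ l, conj (x k) * ((∑ i, conj (C i k) * C i l) * x l) := by
    simp only [dotProduct, mulVec, Matrix.mul_apply, conjTranspose_apply, Pi.star_apply,
      Finset.mul_sum]
    rfl
  have hre : (dotProduct (star x) ((Cᴴ * C) *ᵥ x)).re
      = ∑ k, ∑ l, (conj (x k) * ((∑ i, conj (C i k) * C i l) * x l)).re := by
    rw [expand, Complex.re_sum]
    exact Finset.sum_congr rfl fun k _ => Complex.re_sum _ _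
  have hdd : ∀ k, (∑ i, conj (C i k) * C i k) = (1 : ℂ) := by
    intro k
    have h1 : ∀ i, conj (C i k) * C i k = ((‖C i k‖ ^ 2 : ℝ) : ℂ) := by
      intro i
      rw [Complex.conj_mul']
      push_cast
      ring
    rw [Finset.sum_congr rfl fun i _ => h1 i, ← Complex.ofReal_sum, hdiag k,
      Complex.ofReal_one]
  have hsplit : ∀ k, ∑ l, (conj (x k) * ((∑ i, conj (C i k) * C i l) * x l)).re
      = ‖x k‖ ^ 2 + ∑ l ∈ Finset.univ.erase k,
          (conj (x k) * ((∑ i, conj (C i k) * C i l) * x l)).re := by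
    intro k
    rw [← Finset.add_sum_erase _ _ (Finset.mem_univ k)]
    congr 1
    rw [hdd k, one_mul, Complex.conj_mul', ← Complex.ofReal_pow, Complex.ofReal_re]
  have hoffb : ∀ k, ∀ l ∈ Finset.univ.erase k,
      -(μ * (‖x k‖ * ‖x l‖)) ≤ (conj (x k) * ((∑ i, conj (C i k) * C i l) * x l)).re := by
    intro k l hl
    have hkl : k ≠ l := (Finset.ne_of_mem_erase hl).symm
    have h1 : -‖conj (x k) * ((∑ i, conj (C i k) * C i l) * x l)‖
        ≤ (conj (x k) * ((∑ i, conj (C i k) * C i l) * x l)).re := by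
      have := Complex.abs_re_le_norm (conj (x k) * ((∑ i, conj (C i k) * C i l) * x l))
      have := abs_le.1 this
      linarith [this.1]
    have h2 : ‖conj (x k) * ((∑ i, conj (C i k) * C i l) * x l)‖
        ≤ ‖x k‖ * (μ * ‖x l‖) := by
      rw [norm_mul, norm_mul, RCLike.norm_conj]
      exact mul_le_mul_of_nonneg_left
        (mul_le_mul_of_nonneg_right (hoff k l hkl) (norm_nonneg _)) (norm_nonneg _)
    nlinarith [norm_nonneg (x k), norm_nonneg (x l)]
  set S := ∑ k, ‖x k‖ with hS
  set P := ∑ k, ‖x k‖ ^ 2 with hP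
  have hsum_off : ∑ k, ∑ l ∈ Finset.univ.erase k, (‖x k‖ * ‖x l‖) = S ^ 2 - P := by
    have h1 : ∀ k, ∑ l ∈ Finset.univ.erase k, (‖x k‖ * ‖x l‖)
        = ‖x k‖ * S - ‖x k‖ ^ 2 := by
      intro k
      rw [← Finset.mul_sum, Finset.sum_erase_eq_sub (Finset.mem_univ k), ← hS]
      ring
    rw [Finset.sum_congr rfl fun k _ => h1 k, Finset.sum_sub_distrib, ← Finset.sum_mul, ← hS,
      ← hP]
    ring
  have hcs : S ^ 2 ≤ (Fintype.card n : ℝ) * P := by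
    have := sq_sum_le_card_mul_sum_sq (s := (Finset.univ : Finset n)) (f := fun k => ‖x k‖)
    simpa [hS, hP, Finset.card_univ] using this
  have hPnn : 0 ≤ P := Finset.sum_nonneg fun k _ => sq_nonneg _
  have hlow : P - μ * (S ^ 2 - P)
      ≤ ∑ k, (‖x k‖ ^ 2 + ∑ l ∈ Finset.univ.erase k,
          (conj (x k) * ((∑ i, conj (C i k) * C i l) * x l)).re) := by
    have hterm : ∀ k, ‖x k‖ ^ 2 - μ * ∑ l ∈ Finset.univ.erase k, (‖x k‖ * ‖x l‖)
        ≤ ‖x k‖ ^ 2 + ∑ l ∈ Finset.univ.erase k,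
            (conj (x k) * ((∑ i, conj (C i k) * C i l) * x l)).re := by
      intro k
      have h2 : -(μ * ∑ l ∈ Finset.univ.erase k, (‖x k‖ * ‖x l‖))
          ≤ ∑ l ∈ Finset.univ.erase k,
            (conj (x k) * ((∑ i, conj (C i k) * C i l) * x l)).re := by
        rw [Finset.mul_sum, ← Finset.sum_neg_distrib]
        exact Finset.sum_le_sum (hoffb k)
      linarith
    calc P - μ * (S ^ 2 - P)
        = ∑ k, (‖x k‖ ^ 2 - μ * ∑ l ∈ Finset.univ.erase k, (‖x k‖ * ‖x l‖)) := by
          rw [Finset.sum_sub_distrib, ← Finset.mul_sum, hsum_off, ← hP]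
      _ ≤ _ := Finset.sum_le_sum fun k _ => hterm k
  rw [hre, Finset.sum_congr rfl fun k _ => hsplit k]
  have hmono : μ * (S ^ 2 - P) ≤ μ * (((Fintype.card n : ℝ) - 1) * P) := by
    apply mul_le_mul_of_nonneg_left _ hμ0
    nlinarith
  nlinarith

lemma gram_posDef {m n : Type*} [Fintype m] [Fintype n] [DecidableEq n] (C : Matrix m n ℂ)
    (hdiag : ∀ k, (∑ i, ‖C i k‖ ^ 2 : ℝ) = 1)
    (μ : ℝ) (hμ0 : 0 ≤ μ)
    (hoff : ∀ k l : n, k ≠ l → ‖∑ i, conj (C i k) * C i l‖ ≤ μ)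
    (hδ : 0 < 1 - μ * ((Fintype.card n : ℝ) - 1)) :
    (Cᴴ * C).PosDef := by
  refine .of_dotProduct_mulVec_pos (isHermitian_conjTranspose_mul_self C) fun x hx => ?_
  have hval : dotProduct (star x) ((Cᴴ * C) *ᵥ x)
      = ((∑ i, ‖(C *ᵥ x) i‖ ^ 2 : ℝ) : ℂ) := by
    rw [← mulVec_mulVec, dotProduct_mulVec, ← star_mulVec, dot_star_self']
  rw [hval, Complex.zero_lt_real]
  have hP : 0 < ∑ k, ‖x k‖ ^ 2 := by
    obtain ⟨k, hk⟩ := Function.ne_iff.1 hx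
    exact Finset.sum_pos' (fun _ _ => sq_nonneg _)
      ⟨k, Finset.mem_univ k, pow_pos (norm_pos_iff.2 hk) 2⟩
  have h1 := quad_lower' C hdiag μ hμ0 hoff x
  have h2 : (dotProduct (star x) ((Cᴴ * C) *ᵥ x)).re = ∑ i, ‖(C *ᵥ x) i‖ ^ 2 := by
    rw [hval, Complex.ofReal_re]
  rw [h2] at h1
  calc (0:ℝ) < (1 - μ * ((Fintype.card n : ℝ) - 1)) * (∑ k, ‖x k‖ ^ 2) := by positivity
    _ ≤ _ := h1

/-- Lower bound on the ℓ²-norm of the projected dictionary columns R_E a_ℓ. -/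
theorem projected_column_norm_lower_bound
    {M Na Nb : ℕ} (A : Matrix (Fin M) (Fin Na) ℂ) (B : Matrix (Fin M) (Fin Nb) ℂ)
    (hA : unitCols A) (hB : unitCols B)
    (μb μm : ℝ) (hμb : μb = coh B) (hμm : μm = mcoh A B)
    (E : Finset (Fin Nb)) (ne : ℕ) (hne : E.card = ne)
    (hinv : μb * ((ne : ℝ) - 1) < 1) :
    (∀ l : Fin Na,
      1 - (ne : ℝ) * μm ^ 2 / (1 - μb * ((ne : ℝ) - 1)) ≤
        l2sq ((projC B E).mulVec (fun i => A i l))) ∧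
    ((ne : ℝ) * μm ^ 2 < 1 - μb * ((ne : ℝ) - 1) →
      ∀ l : Fin Na, 0 < Real.sqrt (l2sq ((projC B E).mulVec (fun i => A i l)))) := by
  subst hμb hμm hne
  set μb := coh B with hμb
  set μm := mcoh A B with hμm
  set δ : ℝ := 1 - μb * ((E.card : ℝ) - 1) with hδdef
  have hδpos : 0 < δ := by rw [hδdef]; linarith
  set C : Matrix (Fin M) {j // j ∈ E} ℂ := colsub B E with hC
  have hdiag : ∀ k : {j // j ∈ E}, (∑ i, ‖C i k‖ ^ 2 : ℝ) = 1 := fun k => hB k.val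
  have hoff : ∀ k l : {j // j ∈ E}, k ≠ l → ‖∑ i, conj (C i k) * C i l‖ ≤ μb := by
    intro k l hkl
    exact le_coh B fun h => hkl (Subtype.ext h)
  have hcard : (Fintype.card {j // j ∈ E} : ℝ) = (E.card : ℝ) := by
    norm_cast
    exact Fintype.card_coe E
  have hquad : ∀ x : {j // j ∈ E} → ℂ,
      δ * (∑ k, ‖x k‖ ^ 2) ≤ (dotProduct (star x) ((Cᴴ * C) *ᵥ x)).re := by
    intro x
    have h := quad_lower' C hdiag μb (coh_nonneg B) hoff x
    rwa [hcard, ← hδdef] at h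
  have hpd : (Cᴴ * C).PosDef := by
    apply gram_posDef C hdiag μb (coh_nonneg B) hoff
    rw [hcard, ← hδdef]; exact hδpos
  have hGinv : (Cᴴ * C) * (Cᴴ * C)⁻¹ = 1 :=
    Matrix.mul_nonsing_inv _ ((Matrix.isUnit_iff_isUnit_det _).1 hpd.isUnit)
  have main : ∀ l : Fin Na,
      1 - (E.card : ℝ) * μm ^ 2 / δ ≤ l2sq ((projC B E).mulVec (fun i => A i l)) := by
    intro l
    set a : Fin M → ℂ := fun i => A i l with ha
    set c : {j // j ∈ E} → ℂ := Cᴴ *ᵥ a with hc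
    set y : {j // j ∈ E} → ℂ := (Cᴴ * C)⁻¹ *ᵥ c with hy
    have hGy : (Cᴴ * C) *ᵥ y = c := by
      rw [hy, mulVec_mulVec, hGinv, one_mulVec]
    have hproj : (projC B E) *ᵥ a = a - C *ᵥ y := by
      rw [projC, ← hC, sub_mulVec, one_mulVec]
      congr 1
      rw [← mulVec_mulVec, ← mulVec_mulVec, ← hc, ← hy]
    set t : ℝ := (dotProduct (star c) y).re with ht
    have hcross : dotProduct (star a) (C *ᵥ y) = dotProduct (star c) y := by
      rw [dotProduct_mulVec]
      congr 1
      rw [hc, star_mulVec, conjTranspose_conjTranspose]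
    have htre : (dotProduct (star y) c).re = t := by
      have hconj : dotProduct (star y) c = conj (dotProduct (star c) y) := by
        rw [dotProduct, dotProduct, map_sum]
        refine Finset.sum_congr rfl fun k _ => ?_
        rw [Pi.star_apply, Pi.star_apply, _root_.map_mul, RCLike.star_def,
          Complex.conj_conj, mul_comm]
      rw [hconj, Complex.conj_re, ht]
    have hself : (∑ i, ‖(C *ᵥ y) i‖ ^ 2 : ℝ) = t := by
      have h1 : dotProduct (star (C *ᵥ y)) (C *ᵥ y) = dotProduct (star y) c := by
        rw [star_mulVec, ← dotProduct_mulVec, mulVec_mulVec, hGy]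
      have h2 := dot_star_self' (C *ᵥ y)
      rw [h1] at h2
      have h3 := congrArg Complex.re h2
      rw [Complex.ofReal_re] at h3
      rw [← h3, htre]
    have hval : l2sq ((projC B E) *ᵥ a) = 1 - t := by
      rw [hproj, l2sq]
      have hexp : ∀ i, ‖a i - (C *ᵥ y) i‖ ^ 2
          = ‖a i‖ ^ 2 - 2 * (conj (a i) * (C *ᵥ y) i).re + ‖(C *ᵥ y) i‖ ^ 2 := by
        intro i
        exact norm_sub_sq_complex _ _
      have hsub : ∀ i, (a - C *ᵥ y) i = a i - (C *ᵥ y) i := fun i => rfl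
      calc ∑ i, ‖(a - C *ᵥ y) i‖ ^ 2
          = ∑ i, (‖a i‖ ^ 2 - 2 * (conj (a i) * (C *ᵥ y) i).re + ‖(C *ᵥ y) i‖ ^ 2) := by
            refine Finset.sum_congr rfl fun i _ => ?_
            rw [hsub i, hexp i]
        _ = (∑ i, ‖a i‖ ^ 2) - 2 * (∑ i, (conj (a i) * (C *ᵥ y) i).re)
              + ∑ i, ‖(C *ᵥ y) i‖ ^ 2 := by
            rw [Finset.sum_add_distrib, Finset.sum_sub_distrib, Finset.mul_sum]
        _ = 1 - 2 * t + t := by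
            rw [hA l, hself]
            congr 2
            rw [← Complex.re_sum]
            have : (∑ i, conj (a i) * (C *ᵥ y) i) = dotProduct (star a) (C *ᵥ y) := rfl
            rw [this, hcross, ht]
        _ = 1 - t := by ring
    have hck : ∀ k : {j // j ∈ E}, ‖c k‖ ≤ μm := by
      intro k
      have h1 : c k = conj (∑ i, conj (A i l) * B i k.val) := by
        rw [hc, map_sum]
        simp only [mulVec, dotProduct, conjTranspose_apply, hC, colsub, ha]
        refine Finset.sum_congr rfl fun i _ => ?_
        rw [_root_.map_mul, Complex.conj_conj, mul_comm]
        rfl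
      rw [h1, RCLike.norm_conj]
      exact le_mcoh A B l k.val
    have hCn : (∑ k, ‖c k‖ ^ 2) ≤ (E.card : ℝ) * μm ^ 2 := by
      calc (∑ k, ‖c k‖ ^ 2) ≤ ∑ _k : {j // j ∈ E}, μm ^ 2 :=
            Finset.sum_le_sum fun k _ => pow_le_pow_left₀ (norm_nonneg _) (hck k) 2
        _ = (Fintype.card {j // j ∈ E} : ℝ) * μm ^ 2 := by
            rw [Finset.sum_const, Finset.card_univ, nsmul_eq_mul]
        _ = (E.card : ℝ) * μm ^ 2 := by rw [hcard]
    have hCnn : 0 ≤ ∑ k, ‖c k‖ ^ 2 := Finset.sum_nonneg fun k _ => sq_nonneg _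
    have hYt : δ * (∑ k, ‖y k‖ ^ 2) ≤ t := by
      have h := hquad y
      rw [hGy, htre] at h
      exact h
    have hts : t ≤ ∑ k, ‖c k‖ * ‖y k‖ := by
      rw [ht, dotProduct, Complex.re_sum]
      refine Finset.sum_le_sum fun k _ => ?_
      calc (star c k * y k).re ≤ ‖star c k * y k‖ := by
            exact Complex.re_le_norm _
        _ = ‖c k‖ * ‖y k‖ := by rw [norm_mul, Pi.star_apply, norm_star]
    have hcs2 : (∑ k, ‖c k‖ * ‖y k‖) ^ 2 ≤ (∑ k, ‖c k‖ ^ 2) * (∑ k, ‖y k‖ ^ 2) :=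
      Finset.sum_mul_sq_le_sq_mul_sq _ _ _
    have hYnn : 0 ≤ ∑ k, ‖y k‖ ^ 2 := Finset.sum_nonneg fun k _ => sq_nonneg _
    have htb : t ≤ (∑ k, ‖c k‖ ^ 2) / δ := by
      rcases le_or_gt t 0 with h0 | h0
      · exact le_trans h0 (div_nonneg hCnn hδpos.le)
      · have hs : 0 ≤ ∑ k, ‖c k‖ * ‖y k‖ :=
          Finset.sum_nonneg fun k _ => mul_nonneg (norm_nonneg _) (norm_nonneg _)
        have A1 : t ^ 2 ≤ (∑ k, ‖c k‖ * ‖y k‖) ^ 2 := by nlinarith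
        have A2 : (∑ k, ‖c k‖ * ‖y k‖) ^ 2 * δ
            ≤ ((∑ k, ‖c k‖ ^ 2) * (∑ k, ‖y k‖ ^ 2)) * δ :=
          mul_le_mul_of_nonneg_right hcs2 hδpos.le
        have A3 : (∑ k, ‖c k‖ ^ 2) * (δ * (∑ k, ‖y k‖ ^ 2))
            ≤ (∑ k, ‖c k‖ ^ 2) * t := mul_le_mul_of_nonneg_left hYt hCnn
        have h3 : t * (t * δ) ≤ t * (∑ k, ‖c k‖ ^ 2) := by nlinarith [hδpos.le]
        have h4 : t * δ ≤ ∑ k, ‖c k‖ ^ 2 := le_of_mul_le_mul_left h3 h0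
        rw [le_div_iff₀ hδpos]
        exact h4
    have hfinal : t ≤ (E.card : ℝ) * μm ^ 2 / δ := by
      calc t ≤ (∑ k, ‖c k‖ ^ 2) / δ := htb
        _ ≤ (E.card : ℝ) * μm ^ 2 / δ := by gcongr
    rw [show ((projC B E).mulVec fun i => A i l) = (projC B E) *ᵥ a from rfl, hval]
    linarith
  refine ⟨main, fun h l => ?_⟩
  have h1 := main l
  have h2 : (E.card : ℝ) * μm ^ 2 / δ < 1 := (div_lt_one hδpos).2 h
  have : 0 < l2sq ((projC B E).mulVec fun i => A i l) := by linarith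
  exact Real.sqrt_pos.2 this
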